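/- Let n ≥ 2 and let b_1,…,b_n ≥ 2 and c_1,…,c_n ≥ 1 be integers. Then C_n ∩ C_{n−1} ≠ ∅ if and only if 1/(q_n q_{n−1}) < c_n/((t_n + t_{n−1})(t_{n−1} + t_{n−2})). -/

import Mathlib

/-! With `ε = (-1)^(n-1)`, the determinant identities for convergents show that `C_n` runs from
`x_n = s_n/t_n + p_n/q_n` in the direction `-ε` and `C_{n-1}` runs from `x_{n-1}` in the direction
`ε`, while `ε (x_n - x_{n-1}) > 0`. So the two intervals meet iff their excluded endpoints
`y_n`, `y_{n-1}` (the mediants shifted by `p_k/q_k`) cross, and `ε (y_{n-1} - y_n)` equals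
`c_n/((t_n+t_{n-1})(t_{n-1}+t_{n-2})) - 1/(q_n q_{n-1})`. -/


noncomputable section

namespace ShulgaPaper

open Filter Topology

/-- The value of the finite continued fraction `[0; a₁, …, aₙ]`
(the empty continued fraction has value `0`). -/
def cf : List ℕ → ℝ
  | [] => 0
  | a :: l => 1 / ((a : ℝ) + cf l)

/-- Iterates of the Gauss map, starting from the fractional part of `x`. -/
def gaussIter (x : ℝ) : ℕ → ℝ
  | 0 => Int.fract x
  | n + 1 => Int.fract (1 / gaussIter x n)

/-- The `n`-th partial quotient `aₙ(x)` of the continued fraction expansion of `x`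
(for `n ≥ 1`; a junk value is returned if it is undefined). -/
def pq (x : ℝ) (n : ℕ) : ℕ := ⌊1 / gaussIter x (n - 1)⌋₊

/-- The `n`-th partial quotient `aₙ(x)` of `x` is defined (`n ≥ 1`), i.e. `n` does not
exceed the length of the continued fraction expansion of `x`. -/
def pqDefined (x : ℝ) (n : ℕ) : Prop := gaussIter x (n - 1) ≠ 0

/-- The set `G` of real numbers that are rational or whose partial quotients diverge. -/
def G : Set ℝ :=
  {x | (∃ q : ℚ, x = (q : ℝ)) ∨ Tendsto (fun n => pq x n) atTop atTop}

/-- The list of pairs `(b_k, c_k)`, `k = 1, …, n`, produced by (a totalized version of)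
Shulga's algorithm applied to `α`. -/
def shulgaList (α : ℝ) : ℕ → List (ℕ × ℕ)
  | 0 => []
  | n + 1 =>
      let L := shulgaList α n
      let b := pq (α - cf (L.map Prod.snd)) (n + 1) + 1
      let c := pq (α - cf (L.map Prod.fst ++ [b])) (n + 1)
      L ++ [(b, c)]

/-- The list `[b₁, …, bₙ]` of Shulga's algorithm applied to `α`. -/
def bList (α : ℝ) (n : ℕ) : List ℕ := (shulgaList α n).map Prod.fst

/-- The list `[c₁, …, cₙ]` of Shulga's algorithm applied to `α`. -/
def cList (α : ℝ) (n : ℕ) : List ℕ := (shulgaList α n).map Prod.snd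

/-- `bₙ` of Shulga's algorithm applied to `α` (for `n ≥ 1`). -/
def shulgaB (α : ℝ) (n : ℕ) : ℕ := ((shulgaList α n).getLast?.getD (0, 0)).1

/-- `cₙ` of Shulga's algorithm applied to `α` (for `n ≥ 1`). -/
def shulgaC (α : ℝ) (n : ℕ) : ℕ := ((shulgaList α n).getLast?.getD (0, 0)).2

/-- The first `n` steps of Shulga's algorithm applied to `α` are defined: for each step
`k + 1 ≤ n`, the partial quotients `a_{k+1}(α - [0;c₁,…,c_k])` and
`a_{k+1}(α - [0;b₁,…,b_{k+1}])` defining `b_{k+1}` and `c_{k+1}` exist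
(in particular the algorithm has not stopped before step `n`). -/
def shulgaDefined (α : ℝ) (n : ℕ) : Prop :=
  ∀ k < n, pqDefined (α - cf (cList α k)) (k + 1) ∧
    pqDefined (α - cf (bList α (k + 1))) (k + 1)

/-- The half-open interval whose included endpoint is `x` and excluded endpoint is `y`,
the smaller one being the left endpoint. -/
def hIco (x y : ℝ) : Set ℝ := if x ≤ y then Set.Ico x y else Set.Ioc y x

/-- The list `[a 1, …, a n]`. -/
def listOf (a : ℕ → ℕ) (n : ℕ) : List ℕ := (List.range n).map fun i => a (i + 1)

/-- The interval `B_k` determined by the digits `b`, `c` (`k ≥ 1`). -/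
def Bset (b c : ℕ → ℕ) (k : ℕ) : Set ℝ :=
  hIco (cf (listOf b (k - 1) ++ [b k - 1]) + cf (listOf c (k - 1)))
    (cf (listOf b k) + cf (listOf c (k - 1)))

/-- The interval `C_k` determined by the digits `b`, `c` (`k ≥ 1`). -/
def Cset (b c : ℕ → ℕ) (k : ℕ) : Set ℝ :=
  hIco (cf (listOf c k) + cf (listOf b k))
    (cf (listOf c (k - 1) ++ [c k + 1]) + cf (listOf b k))

/-- `A₀ = [0,1]` and `Aₙ = ⋂_{k=1}^{n} (B_k ∩ C_k)` for `n ≥ 1`. -/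
def Aset (b c : ℕ → ℕ) : ℕ → Set ℝ
  | 0 => Set.Icc 0 1
  | n + 1 => ⋂ k ∈ Finset.Icc 1 (n + 1), (Bset b c k ∩ Cset b c k)

/-- The denominators of the convergents of `[0; a 1, a 2, …]`:
`q₀ = 1`, `q₁ = a 1`, `q_k = a k * q_{k-1} + q_{k-2}`. -/
def qden (a : ℕ → ℕ) : ℕ → ℕ
  | 0 => 1
  | 1 => a 1
  | n + 2 => a (n + 2) * qden a (n + 1) + qden a n

lemma hIco_inter_hIco_nonempty_iff {x y x' y' : ℝ} (hyx : y < x) (hxy' : x' < y')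
    (hx : x' ≤ x) : (hIco x y ∩ hIco x' y').Nonempty ↔ y < y' := by
  rw [hIco, hIco, if_neg hyx.not_ge, if_pos hxy'.le]
  constructor
  · rintro ⟨z, ⟨hyz, -⟩, -, hzy'⟩
    exact hyz.trans hzy'
  · intro hyy'
    rcases lt_or_ge y x' with hyx' | hx'y
    · exact ⟨x', ⟨hyx', hx⟩, le_rfl, hxy'⟩
    · refine ⟨min x ((y + y') / 2), ⟨lt_min hyx (by linarith), min_le_left _ _⟩, ?_, ?_⟩
      · exact le_min hx (by linarith)
      · exact (min_le_right _ _).trans_lt (by linarith)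

lemma hIco_add_inter_hIco_add_nonempty_iff {e u w v u' w' v' c d₁ d₂ d₃ d₄ d₅ : ℝ}
    (he : e = 1 ∨ e = -1) (hd₁ : 0 < d₁) (hd₂ : 0 < d₂) (hd₃ : 0 < d₃) (hd₄ : 0 < d₄)
    (hw : w - u = -e / d₁) (hw' : w' - u' = e / d₂) (hu : u - u' = e / d₃) (hv : v - v' = e / d₄)
    (hww' : w' - w = e * c / d₅) :
    (hIco (u + v) (w + v) ∩ hIco (u' + v') (w' + v')).Nonempty ↔ 1 / d₄ < c / d₅ := by
  have := one_div_pos.mpr hd₁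
  have := one_div_pos.mpr hd₂
  have := one_div_pos.mpr hd₃
  have := one_div_pos.mpr hd₄
  rcases he with rfl | rfl
  · simp only [one_mul, neg_div] at hw hww'
    rw [hIco_inter_hIco_nonempty_iff (by linarith) (by linarith) (by linarith)]
    constructor <;> intro <;> linarith
  · simp only [neg_neg, neg_mul, one_mul, neg_div] at hw hw' hu hv hww'
    rw [Set.inter_comm, hIco_inter_hIco_nonempty_iff (by linarith) (by linarith) (by linarith)]
    constructor <;> intro <;> linarith

def pnum (a : ℕ → ℕ) : ℕ → ℕ
  | 0 => 0
  | 1 => 1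
  | n + 2 => a (n + 2) * pnum a (n + 1) + pnum a n

/-- `cfR [a₁, …, aₙ] x = [0; a₁, …, aₙ + x]`. -/
def cfR : List ℕ → ℝ → ℝ
  | [], x => x
  | a :: l, x => 1 / ((a : ℝ) + cfR l x)

lemma cfR_append (l l' : List ℕ) (x : ℝ) : cfR (l ++ l') x = cfR l (cfR l' x) := by
  induction l with
  | nil => rfl
  | cons a l ih => simp only [List.cons_append, cfR, ih]

lemma cf_eq_cfR_zero (l : List ℕ) : cf l = cfR l 0 := by
  induction l with
  | nil => rfl
  | cons a l ih => simp only [cf, cfR, ih]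

lemma cf_append_succ (l : List ℕ) (k : ℕ) : cf (l ++ [k + 1]) = cfR (l ++ [k]) 1 := by
  rw [cf_eq_cfR_zero, cfR_append, cfR_append]
  simp only [cfR, Nat.cast_add, Nat.cast_one, add_zero]

lemma listOf_succ (a : ℕ → ℕ) (n : ℕ) : listOf a (n + 1) = listOf a n ++ [a (n + 1)] := by
  simp only [listOf, List.range_succ, List.map_append, List.map_cons, List.map_nil]

def DigitsPos (a : ℕ → ℕ) (n : ℕ) : Prop := ∀ k, 1 ≤ k → k ≤ n → 1 ≤ a k

section Convergents

variable {a : ℕ → ℕ}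

lemma DigitsPos.mono {m n : ℕ} (h : DigitsPos a n) (hmn : m ≤ n) : DigitsPos a m :=
  fun k hk hkm => h k hk (hkm.trans hmn)

lemma qden_pos : ∀ {n : ℕ}, DigitsPos a n → 0 < qden a n
  | 0, _ => Nat.one_pos
  | 1, h => h 1 le_rfl le_rfl
  | n + 2, h => Nat.add_pos_right _ (qden_pos (h.mono (Nat.le_add_right n 2)))

lemma qden_cast_pos {n : ℕ} (h : DigitsPos a n) : (0 : ℝ) < qden a n :=
  Nat.cast_pos.mpr (qden_pos h)

lemma pnum_add_two_cast (n : ℕ) :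
    (pnum a (n + 2) : ℝ) = a (n + 2) * pnum a (n + 1) + pnum a n := by
  simp [pnum]

lemma qden_add_two_cast (n : ℕ) :
    (qden a (n + 2) : ℝ) = a (n + 2) * qden a (n + 1) + qden a n := by
  simp [qden]

variable (a) in
lemma pnum_mul_qden_sub (n : ℕ) :
    (pnum a (n + 1) : ℝ) * qden a n - pnum a n * qden a (n + 1) = (-1) ^ n := by
  induction n with
  | zero => simp [pnum, qden]
  | succ n ih =>
    rw [pnum_add_two_cast, qden_add_two_cast]
    linear_combination -ih

lemma cfR_listOf {n : ℕ} (h : DigitsPos a (n + 1)) {x : ℝ} (hx : 0 ≤ x) :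
    cfR (listOf a (n + 1)) x =
      (pnum a (n + 1) + x * pnum a n) / (qden a (n + 1) + x * qden a n) := by
  induction n generalizing x with
  | zero => simp [listOf, cfR, pnum, qden]
  | succ n ih =>
    have ha : (0 : ℝ) < a (n + 2) + x := by
      have : (1 : ℝ) ≤ a (n + 2) := by exact_mod_cast h (n + 2) le_add_self le_rfl
      linarith
    rw [listOf_succ, cfR_append, cfR, cfR,
      ih (h.mono (Nat.le_succ (n + 1))) (by positivity), pnum_add_two_cast, qden_add_two_cast,
      ← mul_div_mul_right _ _ ha.ne']
    congr 1 <;> field_simp <;> ring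

lemma cf_listOf {n : ℕ} (h : DigitsPos a n) : cf (listOf a n) = pnum a n / qden a n := by
  cases n with
  | zero => simp [listOf, cf, pnum]
  | succ n => simp [cf_eq_cfR_zero, cfR_listOf h le_rfl]

lemma cf_listOf_append_succ {n : ℕ} (h : DigitsPos a (n + 1)) :
    cf (listOf a n ++ [a (n + 1) + 1]) =
      (pnum a (n + 1) + pnum a n) / (qden a (n + 1) + qden a n) := by
  rw [cf_append_succ, ← listOf_succ, cfR_listOf h zero_le_one, one_mul, one_mul]

lemma convergent_sub_convergent {n : ℕ} (h : DigitsPos a (n + 1)) :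
    (pnum a (n + 1) : ℝ) / qden a (n + 1) - pnum a n / qden a n =
      (-1) ^ n / (qden a (n + 1) * qden a n) := by
  rw [div_sub_div _ _ (qden_cast_pos h).ne' (qden_cast_pos (h.mono n.le_succ)).ne',
    ← pnum_mul_qden_sub a n]
  ring

lemma mediant_sub_convergent {n : ℕ} (h : DigitsPos a (n + 1)) :
    ((pnum a (n + 1) : ℝ) + pnum a n) / (qden a (n + 1) + qden a n) -
        pnum a (n + 1) / qden a (n + 1) =
      (-1) ^ (n + 1) / ((qden a (n + 1) + qden a n) * qden a (n + 1)) := by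
  have hq := qden_cast_pos h
  rw [div_sub_div _ _ (by positivity) hq.ne', pow_succ, ← pnum_mul_qden_sub a n]
  ring

lemma mediant_sub_mediant {n : ℕ} (h : DigitsPos a (n + 2)) :
    ((pnum a (n + 1) : ℝ) + pnum a n) / (qden a (n + 1) + qden a n) -
        (pnum a (n + 2) + pnum a (n + 1)) / (qden a (n + 2) + qden a (n + 1)) =
      (-1) ^ (n + 1) * a (n + 2) /
        ((qden a (n + 2) + qden a (n + 1)) * (qden a (n + 1) + qden a n)) := by
  have hq := qden_cast_pos (h.mono (Nat.le_succ (n + 1)))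
  have hq' := qden_cast_pos h
  rw [div_sub_div _ _ (by positivity) (by positivity), pow_succ, ← pnum_mul_qden_sub a n,
    pnum_add_two_cast, qden_add_two_cast]
  ring

end Convergents

lemma Cset_succ {b c : ℕ → ℕ} {n : ℕ} (hb : DigitsPos b (n + 1)) (hc : DigitsPos c (n + 1)) :
    Cset b c (n + 1) =
      hIco (pnum c (n + 1) / qden c (n + 1) + pnum b (n + 1) / qden b (n + 1))
        ((pnum c (n + 1) + pnum c n) / (qden c (n + 1) + qden c n) +
          pnum b (n + 1) / qden b (n + 1)) := by
  rw [Cset, Nat.add_sub_cancel, cf_listOf hb, cf_listOf hc, cf_listOf_append_succ hc]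

lemma Cset_inter_Cset_nonempty_iff {b c : ℕ → ℕ} {m : ℕ} (hb : DigitsPos b (m + 2))
    (hc : DigitsPos c (m + 2)) :
    (Cset b c (m + 2) ∩ Cset b c (m + 1)).Nonempty ↔
      (1 : ℝ) / (qden b (m + 2) * qden b (m + 1)) <
        c (m + 2) / ((qden c (m + 2) + qden c (m + 1)) * (qden c (m + 1) + qden c m)) := by
  have hb₁ := hb.mono (Nat.le_succ (m + 1))
  have hc₁ := hc.mono (Nat.le_succ (m + 1))
  have hT₀ := qden_cast_pos (hc₁.mono m.le_succ)
  have hT₁ := qden_cast_pos hc₁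
  have hT₂ := qden_cast_pos hc
  have hm₂ := mediant_sub_convergent hc
  rw [pow_succ, mul_neg_one] at hm₂
  rw [Cset_succ hb hc, Cset_succ hb₁ hc₁]
  refine hIco_add_inter_hIco_add_nonempty_iff (neg_one_pow_eq_or ℝ (m + 1)) ?_ ?_ ?_
    (mul_pos (qden_cast_pos hb) (qden_cast_pos hb₁)) hm₂ (mediant_sub_convergent hc₁)
    (convergent_sub_convergent hc) (convergent_sub_convergent hb) (mediant_sub_mediant hc)
  all_goals positivity

/-- `Cₙ ∩ C_{n−1} ≠ ∅ ↔ 1/(qₙq_{n−1}) < cₙ/((tₙ+t_{n−1})(t_{n−1}+t_{n−2}))`. -/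
theorem stmt12 (n : ℕ) (hn : 2 ≤ n) (b c : ℕ → ℕ)
    (hb : ∀ k : ℕ, 1 ≤ k → k ≤ n → 2 ≤ b k) (hc : ∀ k : ℕ, 1 ≤ k → k ≤ n → 1 ≤ c k) :
    (Cset b c n ∩ Cset b c (n - 1)).Nonempty ↔
      (1 : ℝ) / ((qden b n : ℝ) * (qden b (n - 1) : ℝ)) <
        (c n : ℝ) / (((qden c n : ℝ) + (qden c (n - 1) : ℝ)) *
          ((qden c (n - 1) : ℝ) + (qden c (n - 2) : ℝ))) := by
  obtain ⟨m, rfl⟩ : ∃ m, n = m + 2 := ⟨n - 2, by omega⟩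
  exact Cset_inter_Cset_nonempty_iff (fun k hk hkn => one_le_two.trans (hb k hk hkn)) hc

end ShulgaPaper
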